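/- arXiv:0909.0119 — 3 statements merged into one kernel-verified Lean document; each statement's English description precedes it below -/
import Mathlib

section
/- (Lemma 1, inequality (5.2).) For any policy π, any t ≥ 1, and any reals x > 0 and τ > 0, P( |θ̂_π(t) − θ| > x and T_π(t) > τ ) ≤ 2 exp( −x² τ / (4σ²) ). -/
open MeasureTheory ProbabilityTheory

noncomputable section

namespace OneArmedBandit

/-- The model of Woodroofe's one-armed bandit problem with covariates: the covariates
`X_t` are i.i.d. with common law `PX`, the noise variables `ε_t` are i.i.d. centered
Gaussian with variance `σ²`, and all these random variables are mutually independent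
under the probability measure `P`. -/
structure Model (Ω : Type) [MeasurableSpace Ω] where
  P : Measure Ω
  isProb : IsProbabilityMeasure P
  X : ℕ → Ω → ℝ
  eps : ℕ → Ω → ℝ
  σ : ℝ
  σ_pos : 0 < σ
  PX : Measure ℝ
  PX_prob : IsProbabilityMeasure PX
  meas_X : ∀ t, Measurable (X t)
  meas_eps : ∀ t, Measurable (eps t)
  law_X : ∀ t, P.map (X t) = PX
  law_eps : ∀ t, P.map (eps t) = gaussianReal 0 ⟨σ ^ 2, sq_nonneg σ⟩
  indep : iIndepFun (Sum.elim X eps) P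

variable {Ω : Type} [MeasurableSpace Ω]

/-- The reward of arm 1 at time `t`: `Y_t = X_t − θ + ε_t` (arm 0 yields reward 0). -/
def Model.Y (M : Model Ω) (θ : ℝ) (t : ℕ) (ω : Ω) : ℝ := M.X t ω - θ + M.eps t ω

/-- `T_π(t) = ∑_{s=1}^t π_s`, the number of pulls of arm 1 up to time `t`. -/
def Tpulls (π : ℕ → Ω → ℝ) (t : ℕ) (ω : Ω) : ℝ := ∑ s ∈ Finset.Icc 1 t, π s ω

/-- The estimator `θ̂_π(t) = T_π(t)⁻¹ ∑_{s=1}^t (X_s − Y_s) π_s`. -/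
def thetaHat (M : Model Ω) (θ : ℝ) (π : ℕ → Ω → ℝ) (t : ℕ) (ω : Ω) : ℝ :=
  (Tpulls π t ω)⁻¹ * ∑ s ∈ Finset.Icc 1 t, (M.X s ω - M.Y θ s ω) * π s ω

/-- `F⁺_t = σ(X_1,…,X_t,X_{t+1}; π_1,…,π_t; π_1Y_1,…,π_tY_t)`. -/
def Fplus (M : Model Ω) (θ : ℝ) (π : ℕ → Ω → ℝ) (t : ℕ) : MeasurableSpace Ω :=
  (⨆ s ∈ Finset.Icc 1 (t + 1), MeasurableSpace.comap (M.X s) inferInstance) ⊔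
  (⨆ s ∈ Finset.Icc 1 t, MeasurableSpace.comap (π s) inferInstance) ⊔
  (⨆ s ∈ Finset.Icc 1 t, MeasurableSpace.comap (fun ω => π s ω * M.Y θ s ω) inferInstance)

/-- `F_t = σ(X_1,…,X_t; π_1,…,π_t; π_1Y_1,…,π_tY_t)`. -/
def Ffilt (M : Model Ω) (θ : ℝ) (π : ℕ → Ω → ℝ) (t : ℕ) : MeasurableSpace Ω :=
  (⨆ s ∈ Finset.Icc 1 t, MeasurableSpace.comap (M.X s) inferInstance) ⊔
  (⨆ s ∈ Finset.Icc 1 t, MeasurableSpace.comap (π s) inferInstance) ⊔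
  (⨆ s ∈ Finset.Icc 1 t, MeasurableSpace.comap (fun ω => π s ω * M.Y θ s ω) inferInstance)

/-- A policy: a `{0,1}`-valued sequence of random variables, `π_t` being measurable
with respect to `F⁺_{t−1}`. -/
structure IsPolicy (M : Model Ω) (θ : ℝ) (π : ℕ → Ω → ℝ) : Prop where
  vals : ∀ t ω, π t ω = 0 ∨ π t ω = 1
  adapted : ∀ t, 1 ≤ t → Measurable[Fplus M θ π (t - 1)] (π t)

/-- The oracle policy `π*_t = I{X_t ≥ θ}`. -/
def oracle (M : Model Ω) (θ : ℝ) (t : ℕ) (ω : Ω) : ℝ := if θ ≤ M.X t ω then 1 else 0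

/-- The inferior sampling rate `S_n(π, π*) = ∑_{t=1}^n P(π_t ≠ π*_t)`. -/
def Srate (M : Model Ω) (θ : ℝ) (π : ℕ → Ω → ℝ) (n : ℕ) : ℝ :=
  ∑ t ∈ Finset.Icc 1 n, (M.P {ω | π t ω ≠ oracle M θ t ω}).toReal

/-- The regret `R_n(π, π*) = E ∑_{t=1}^n |X_t − θ| I{π_t ≠ π*_t}`. -/
def Regret (M : Model Ω) (θ : ℝ) (π : ℕ → Ω → ℝ) (n : ℕ) : ℝ :=
  ∫ ω, (∑ t ∈ Finset.Icc 1 n,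
    |M.X t ω - θ| * (if π t ω ≠ oracle M θ t ω then 1 else 0)) ∂M.P

/-- `(θ, P_X)` belongs to the class `𝒫_α` with constants `C_*, x₀, p`. -/
structure InClass (PX : Measure ℝ) (θ Cstar x0 p α : ℝ) : Prop where
  margin : ∀ x ∈ Set.Ioc (0 : ℝ) x0, (PX (Set.Icc (θ - x) (θ + x))).toReal ≤ Cstar * x ^ α
  p_le : p ≤ (PX (Set.Ici θ)).toReal
  lt_one : (PX (Set.Ici θ)).toReal < 1

/-- `(θ, P_X)` belongs to the class `𝒫'_α`: additionally `∫ |x − θ| P_X(dx) ≤ μ`. -/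
structure InClass' (PX : Measure ℝ) (θ Cstar x0 p α μ : ℝ)
    extends InClass PX θ Cstar x0 p α : Prop where
  moment : ∫ x, |x - θ| ∂PX ≤ μ

end OneArmedBandit

/-!
Let `𝒢_t` be generated by all the covariates and by `ε_0, …, ε_t`. By induction `F⁺_t ≤ 𝒢_t`,
so `π_{t+1}` is `𝒢_t`-measurable while `ε_{t+1}` is independent of `𝒢_t`. As
`E exp(λ ε) = exp(σ²λ²/2)`, the process `exp(λ S_t − σ²λ²/2 · T_π(t))`, where
`S_t = ∑_{s ≤ t} ε_s π_s`, is then a nonnegative supermartingale of expectation at most `1`.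
On the event in question `|S_t| > x T_π(t)` and `T_π(t) > τ`, so for `λ = ±x/σ²` the exponent
exceeds `x²τ/(2σ²)`, and Markov's inequality bounds the probability of each sign by
`exp(−x²τ/(2σ²)) ≤ exp(−x²τ/(4σ²))`.
-/

namespace OneArmedBandit

open Finset
open Real (exp exp_pos exp_le_exp exp_add exp_neg exp_zero measurable_exp)
open scoped ENNReal

section ExponentialSupermartingale

variable {Ω : Type*} {m : MeasurableSpace Ω} {μ : Measure Ω}

theorem measure_ge_le_exp_neg_of_lintegral_exp_le_one {Z : Ω → ℝ} (hZ : AEMeasurable Z μ)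
    (hZ_exp : ∫⁻ ω, ENNReal.ofReal (exp (Z ω)) ∂μ ≤ 1) (b : ℝ) :
    μ {ω | b ≤ Z ω} ≤ ENNReal.ofReal (exp (-b)) :=
  calc μ {ω | b ≤ Z ω}
      ≤ μ {ω | ENNReal.ofReal (exp b) ≤ ENNReal.ofReal (exp (Z ω))} :=
        measure_mono fun ω h => ENNReal.ofReal_le_ofReal (exp_le_exp.2 h)
    _ ≤ (∫⁻ ω, ENNReal.ofReal (exp (Z ω)) ∂μ) / ENNReal.ofReal (exp b) :=
        meas_ge_le_lintegral_div (measurable_exp.comp_aemeasurable hZ).ennreal_ofReal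
          (ENNReal.ofReal_pos.2 (exp_pos b)).ne' ENNReal.ofReal_ne_top
    _ ≤ 1 / ENNReal.ofReal (exp b) := by gcongr
    _ = ENNReal.ofReal (exp (-b)) := by
        rw [one_div, ← ENNReal.ofReal_inv_of_pos (exp_pos b), exp_neg]

theorem lintegral_ofReal_exp_mul_eq_of_map_eq_gaussianReal {X : Ω → ℝ} {v : NNReal}
    (hX : μ.map X = gaussianReal 0 v) (L : ℝ) :
    ∫⁻ ω, ENNReal.ofReal (exp (L * X ω)) ∂μ = ENNReal.ofReal (exp (v * L ^ 2 / 2)) := by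
  have hmgf : mgf X μ L = exp (v * L ^ 2 / 2) := by simpa using mgf_gaussianReal hX L
  have hint : Integrable (fun ω => exp (L * X ω)) μ := by
    by_contra h
    exact (exp_pos _).ne' (hmgf ▸ mgf_undef h)
  rw [← hmgf, mgf, ofReal_integral_eq_lintegral_ofReal hint
    (Filter.Eventually.of_forall fun ω => (exp_pos _).le)]

theorem lintegral_mul_exp_sub_mul_le {G : MeasurableSpace Ω} (hG : G ≤ m) {F : Ω → ℝ≥0∞}
    {ξ p : Ω → ℝ} {c : ℝ} (hF : Measurable[G] F) (hp : Measurable[G] p)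
    (hp01 : ∀ ω, p ω = 0 ∨ p ω = 1) (hξ : Measurable[m] ξ)
    (hindep : Indep G (MeasurableSpace.comap ξ inferInstance) μ)
    (hξ_exp : ∫⁻ ω, ENNReal.ofReal (exp (ξ ω)) ∂μ ≤ ENNReal.ofReal (exp c)) :
    ∫⁻ ω, F ω * ENNReal.ofReal (exp ((ξ ω - c) * p ω)) ∂μ ≤ ∫⁻ ω, F ω ∂μ := by
  set A := {ω | p ω = 1}
  have hA : MeasurableSet[G] A := hp (measurableSet_singleton 1)
  have hsplit : ∀ ω, F ω * ENNReal.ofReal (exp ((ξ ω - c) * p ω)) =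
      A.indicator (fun ω => F ω * ENNReal.ofReal (exp (-c))) ω * ENNReal.ofReal (exp (ξ ω))
        + Aᶜ.indicator F ω := by
    intro ω
    rcases hp01 ω with h | h
    · simp [A, h]
    · have hω : ω ∈ A := h
      rw [Set.indicator_of_mem hω, Set.indicator_of_notMem (not_not.2 hω), h, mul_one, add_zero,
        mul_assoc, ← ENNReal.ofReal_mul (exp_pos _).le, ← exp_add, sub_eq_neg_add]
  have hfG : Measurable[G] (A.indicator fun ω => F ω * ENNReal.ofReal (exp (-c))) :=
    (hF.mul_const _).indicator hA
  calc ∫⁻ ω, F ω * ENNReal.ofReal (exp ((ξ ω - c) * p ω)) ∂μ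
      = (∫⁻ ω, A.indicator (fun ω => F ω * ENNReal.ofReal (exp (-c))) ω ∂μ)
          * (∫⁻ ω, ENNReal.ofReal (exp (ξ ω)) ∂μ) + ∫⁻ ω, Aᶜ.indicator F ω ∂μ := by
        simp_rw [hsplit]
        rw [lintegral_add_right _ ((hF.mono hG le_rfl).indicator (hG _ hA.compl)),
          lintegral_mul_eq_lintegral_mul_lintegral_of_independent_measurableSpace hG
            hξ.comap_le hindep hfG
            ((comap_measurable ξ).exp.ennreal_ofReal)]
    _ ≤ (∫⁻ ω, A.indicator (fun ω => F ω * ENNReal.ofReal (exp (-c))) ω ∂μ)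
          * ENNReal.ofReal (exp c) + ∫⁻ ω, Aᶜ.indicator F ω ∂μ := by gcongr
    _ = ∫⁻ ω in A, F ω ∂μ + ∫⁻ ω in Aᶜ, F ω ∂μ := by
        rw [lintegral_indicator (hG _ hA), lintegral_indicator (hG _ hA.compl),
          lintegral_mul_const _ (hF.mono hG le_rfl), mul_assoc,
          ← ENNReal.ofReal_mul (exp_pos _).le, ← exp_add, neg_add_cancel, exp_zero,
          ENNReal.ofReal_one, mul_one]
    _ = ∫⁻ ω, F ω ∂μ := lintegral_add_compl F (hG _ hA)

variable (G : Filtration ℕ m) {ξ π : ℕ → Ω → ℝ} {c : ℝ}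

theorem measurable_filtration_sum_sub_mul (hξ : Adapted G ξ) (hπ : Adapted G fun t => π (t + 1))
    (t : ℕ) : Measurable[G t] fun ω => ∑ s ∈ Icc 1 t, (ξ s ω - c) * π s ω := by
  refine Finset.measurable_sum _ fun s hs => ?_
  obtain ⟨k, rfl⟩ : ∃ k, s = k + 1 := ⟨s - 1, by grind⟩
  have hk : k < t := by grind
  exact (((hξ _).mono (G.mono hk) le_rfl).sub_const c).mul ((hπ k).mono (G.mono hk.le) le_rfl)

variable [IsProbabilityMeasure μ]

theorem lintegral_exp_sum_sub_mul_le_one (hξ : Adapted G ξ) (hπ : Adapted G fun t => π (t + 1))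
    (hπ01 : ∀ t ω, π t ω = 0 ∨ π t ω = 1)
    (hindep : ∀ t, Indep (G t) (MeasurableSpace.comap (ξ (t + 1)) inferInstance) μ)
    (hξ_exp : ∀ t, ∫⁻ ω, ENNReal.ofReal (exp (ξ (t + 1) ω)) ∂μ ≤ ENNReal.ofReal (exp c))
    (t : ℕ) : ∫⁻ ω, ENNReal.ofReal (exp (∑ s ∈ Icc 1 t, (ξ s ω - c) * π s ω)) ∂μ ≤ 1 := by
  induction t with
  | zero => simp
  | succ t ih =>
    simp_rw [sum_Icc_succ_top (Nat.le_add_left 1 t), exp_add, ENNReal.ofReal_mul (exp_pos _).le]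
    exact (lintegral_mul_exp_sub_mul_le (G.le t)
      (measurable_filtration_sum_sub_mul G hξ hπ t).exp.ennreal_ofReal (hπ t) (hπ01 _)
      ((hξ _).mono (G.le _) le_rfl) (hindep t) (hξ_exp t)).trans ih

theorem measure_sum_sub_mul_ge_le_exp_neg (hξ : Adapted G ξ) (hπ : Adapted G fun t => π (t + 1))
    (hπ01 : ∀ t ω, π t ω = 0 ∨ π t ω = 1)
    (hindep : ∀ t, Indep (G t) (MeasurableSpace.comap (ξ (t + 1)) inferInstance) μ)
    (hξ_exp : ∀ t, ∫⁻ ω, ENNReal.ofReal (exp (ξ (t + 1) ω)) ∂μ ≤ ENNReal.ofReal (exp c))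
    (t : ℕ) (b : ℝ) : μ {ω | b ≤ ∑ s ∈ Icc 1 t, (ξ s ω - c) * π s ω} ≤ ENNReal.ofReal (exp (-b)) :=
  measure_ge_le_exp_neg_of_lintegral_exp_le_one
    ((measurable_filtration_sum_sub_mul G hξ hπ t).mono (G.le t) le_rfl).aemeasurable
    (lintegral_exp_sum_sub_mul_le_one G hξ hπ hπ01 hindep hξ_exp t) b

end ExponentialSupermartingale

section Model

variable {Ω : Type} [MeasurableSpace Ω] (M : Model Ω)

theorem Model.measurable_sumElim (i : ℕ ⊕ ℕ) : Measurable (Sum.elim M.X M.eps i) := by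
  rcases i with s | s
  exacts [M.meas_X s, M.meas_eps s]

/-- `𝒢_t = σ(X_s, s ≥ 0; ε_0, …, ε_t)`. -/
def Model.filtration : Filtration ℕ ‹MeasurableSpace Ω› where
  seq t := ⨆ i ∈ (Sum.inr '' Set.Ioi t)ᶜ,
    MeasurableSpace.comap (Sum.elim M.X M.eps i) inferInstance
  mono' t t' h := biSup_mono fun i hi => by
    rcases i with s | s <;> simp_all only [Set.mem_compl_iff, Set.mem_image, Set.mem_Ioi] <;> grind
  le' _ := iSup₂_le fun i _ => (M.measurable_sumElim i).comap_le

theorem Model.comap_le_filtration {t : ℕ} {i : ℕ ⊕ ℕ} (hi : i ∈ (Sum.inr '' Set.Ioi t)ᶜ) :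
    MeasurableSpace.comap (Sum.elim M.X M.eps i) inferInstance ≤ M.filtration t :=
  le_iSup₂ (f := fun i (_ : i ∈ (Sum.inr '' Set.Ioi t)ᶜ) =>
    MeasurableSpace.comap (Sum.elim M.X M.eps i) inferInstance) i hi

theorem Model.measurable_X_filtration (s t : ℕ) : Measurable[M.filtration t] (M.X s) :=
  Measurable.of_comap_le <| M.comap_le_filtration (i := Sum.inl s) (by simp)

theorem Model.adapted_eps : Adapted M.filtration M.eps := fun t =>
  Measurable.of_comap_le <| M.comap_le_filtration (i := Sum.inr t) (by simp)

theorem Model.indep_filtration_eps_succ (t : ℕ) :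
    Indep (M.filtration t) (MeasurableSpace.comap (M.eps (t + 1)) inferInstance) M.P := by
  have h := indep_biSup_compl (fun i => (M.measurable_sumElim i).comap_le) M.indep.iIndep
    (Sum.inr '' Set.Ioi t)ᶜ
  rw [compl_compl] at h
  exact indep_of_indep_of_le_right h <| le_iSup₂ (f := fun i (_ : i ∈ Sum.inr '' Set.Ioi t) =>
    MeasurableSpace.comap (Sum.elim M.X M.eps i) inferInstance) (Sum.inr (t + 1)) (by simp)

variable {M} {θ : ℝ} {π : ℕ → Ω → ℝ}

theorem IsPolicy.fplus_le_filtration (hπ : IsPolicy M θ π) (t : ℕ) :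
    Fplus M θ π t ≤ M.filtration t := by
  induction t using Nat.strong_induction_on with
  | _ t ih =>
  have hπt : ∀ s ∈ Icc 1 t, Measurable[M.filtration t] (π s) := fun s hs => by
    rw [mem_Icc] at hs
    exact (hπ.adapted s hs.1).mono ((ih (s - 1) (by omega)).trans (M.filtration.mono (by omega)))
      le_rfl
  refine sup_le (sup_le ?_ ?_) ?_ <;> refine iSup₂_le fun s hs => Measurable.comap_le ?_
  · exact M.measurable_X_filtration s t
  · exact hπt s hs
  · exact (hπt s hs).mul (((M.measurable_X_filtration s t).sub_const θ).add
      ((M.adapted_eps s).mono (M.filtration.mono (mem_Icc.1 hs).2) le_rfl))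

theorem IsPolicy.adapted_succ (hπ : IsPolicy M θ π) : Adapted M.filtration fun t => π (t + 1) :=
  fun t => (hπ.adapted (t + 1) (Nat.le_add_left 1 t)).mono (hπ.fplus_le_filtration t) le_rfl

theorem IsPolicy.measure_mul_sum_sub_ge_le (hπ : IsPolicy M θ π) (L b : ℝ) (t : ℕ) :
    M.P {ω | b ≤ L * ∑ s ∈ Icc 1 t, M.eps s ω * π s ω - M.σ ^ 2 * L ^ 2 / 2 * Tpulls π t ω}
      ≤ ENNReal.ofReal (exp (-b)) := by
  have := M.isProb
  have hsum : ∀ ω, L * ∑ s ∈ Icc 1 t, M.eps s ω * π s ω - M.σ ^ 2 * L ^ 2 / 2 * Tpulls π t ω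
      = ∑ s ∈ Icc 1 t, (L * M.eps s ω - M.σ ^ 2 * L ^ 2 / 2) * π s ω := fun ω => by
    simp only [Tpulls, mul_sum, ← sum_sub_distrib, sub_mul, mul_assoc]
  simp_rw [hsum]
  refine measure_sum_sub_mul_ge_le_exp_neg M.filtration (fun t => (M.adapted_eps t).const_mul L)
    hπ.adapted_succ hπ.vals (fun t => ?_) (fun t => ?_) t b
  · exact indep_of_indep_of_le_right (M.indep_filtration_eps_succ t)
      ((comap_measurable _).const_mul L).comap_le
  · exact (lintegral_ofReal_exp_mul_eq_of_map_eq_gaussianReal (M.law_eps (t + 1)) L).le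

end Model

theorem thetaHat_sub_eq {Ω : Type} [MeasurableSpace Ω] {M : Model Ω} {θ : ℝ} {π : ℕ → Ω → ℝ}
    {t : ℕ} {ω : Ω} (hT : Tpulls π t ω ≠ 0) :
    thetaHat M θ π t ω - θ = -(∑ s ∈ Icc 1 t, M.eps s ω * π s ω) / Tpulls π t ω := by
  have hsum : ∑ s ∈ Icc 1 t, (M.X s ω - M.Y θ s ω) * π s ω
      = θ * Tpulls π t ω - ∑ s ∈ Icc 1 t, M.eps s ω * π s ω := by
    simp only [Model.Y, Tpulls, mul_sum, ← sum_sub_distrib]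
    exact sum_congr rfl fun s _ => by ring
  rw [thetaHat, hsum]
  field_simp
  ring

theorem sq_mul_div_le_mul_sub {x v τ T S : ℝ} (hx : 0 ≤ x) (hv : 0 < v) (hτT : τ ≤ T)
    (hS : x * T ≤ S) : x ^ 2 * τ / (2 * v) ≤ x / v * S - v * (x / v) ^ 2 / 2 * T := by
  have hrhs : x / v * S - v * (x / v) ^ 2 / 2 * T = (2 * x * S - x ^ 2 * T) / (2 * v) := by
    field_simp
  rw [hrhs]
  gcongr
  nlinarith [mul_le_mul_of_nonneg_left hS hx, mul_le_mul_of_nonneg_left hτT (sq_nonneg x)]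

theorem lemma1_tail_bound_general (Ω : Type) [MeasurableSpace Ω] (M : Model Ω) (θ : ℝ)
    (π : ℕ → Ω → ℝ) (hπ : IsPolicy M θ π) (t : ℕ)
    (x τ : ℝ) (hx : 0 < x) (hτ : 0 < τ) :
    (M.P {ω | x < |thetaHat M θ π t ω - θ| ∧ τ < Tpulls π t ω}).toReal ≤
      2 * Real.exp (-(x ^ 2 * τ) / (4 * M.σ ^ 2)) := by
  have hσ : 0 < M.σ ^ 2 := pow_pos M.σ_pos 2
  set S := fun ω => ∑ s ∈ Icc 1 t, M.eps s ω * π s ω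
  set L := x / M.σ ^ 2
  set b := x ^ 2 * τ / (2 * M.σ ^ 2)
  have hsub : {ω | x < |thetaHat M θ π t ω - θ| ∧ τ < Tpulls π t ω} ⊆
      {ω | b ≤ L * S ω - M.σ ^ 2 * L ^ 2 / 2 * Tpulls π t ω} ∪
        {ω | b ≤ -L * S ω - M.σ ^ 2 * (-L) ^ 2 / 2 * Tpulls π t ω} := by
    rintro ω ⟨hθ, hT⟩
    have hT0 : 0 < Tpulls π t ω := hτ.trans hT
    rw [thetaHat_sub_eq hT0.ne', abs_div, abs_neg, abs_of_pos hT0, lt_div_iff₀ hT0] at hθ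
    rcases lt_abs.1 hθ with h | h
    · exact Or.inl (sq_mul_div_le_mul_sub hx.le hσ hT.le h.le)
    · refine Or.inr ((sq_mul_div_le_mul_sub (S := -S ω) hx.le hσ hT.le h.le).trans_eq ?_)
      ring
  have hP : M.P {ω | x < |thetaHat M θ π t ω - θ| ∧ τ < Tpulls π t ω}
      ≤ ENNReal.ofReal (2 * exp (-b)) :=
    calc _ ≤ _ := measure_mono hsub
      _ ≤ _ := measure_union_le _ _
      _ ≤ ENNReal.ofReal (exp (-b)) + ENNReal.ofReal (exp (-b)) :=
        add_le_add (hπ.measure_mul_sum_sub_ge_le L b t) (hπ.measure_mul_sum_sub_ge_le (-L) b t)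
      _ = ENNReal.ofReal (2 * exp (-b)) := by
        rw [← two_mul, ENNReal.ofReal_mul zero_le_two, ENNReal.ofReal_ofNat]
  calc _ ≤ 2 * exp (-b) := ENNReal.toReal_le_of_le_ofReal (by positivity) hP
    _ ≤ 2 * exp (-(x ^ 2 * τ) / (4 * M.σ ^ 2)) := by
      rw [neg_div]
      gcongr
      exact div_le_div_of_nonneg_left (by positivity) (by positivity) (by linarith)

/-- Lemma 1, inequality (5.2): for any policy `π`, any `t ≥ 1` and any `x, τ > 0`,
`P(|θ̂_π(t) − θ| > x, T_π(t) > τ) ≤ 2 exp(−x²τ/(4σ²))`. -/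
theorem lemma1_tail_bound (Ω : Type) [MeasurableSpace Ω] (M : Model Ω) (θ : ℝ)
    (π : ℕ → Ω → ℝ) (hπ : IsPolicy M θ π) (t : ℕ) (ht : 1 ≤ t)
    (x τ : ℝ) (hx : 0 < x) (hτ : 0 < τ) :
    (M.P {ω | x < |thetaHat M θ π t ω - θ| ∧ τ < Tpulls π t ω}).toReal ≤
      2 * Real.exp (-(x ^ 2 * τ) / (4 * M.σ ^ 2)) :=
  lemma1_tail_bound_general Ω M θ π hπ t x τ hx hτ

end OneArmedBandit
end
end

section
/- (Lemma 2.) Assume P_X([θ,∞)) ≥ p for some p ∈ (0,1), and let (δ_t)_{t≥1} be a nondecreasing sequence of positive reals. Let π̂ be the nearly-myopic policy: π̂_1 = 1 and π̂_{t+1} = I{X_{t+1} ≥ θ̂_π̂(t) − δ_t/√(T_π̂(t))}. Then for every z ∈ (0, 1/4] and every t ≥ 2, P( T_π̂(t) ≤ z p t ) ≤ exp( −p² z² t / 2 ) + 4 z t exp( −δ²_{⌊(1−2z)t⌋} / (4σ²) ). -/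
open MeasureTheory ProbabilityTheory

noncomputable section

namespace OneArmedBandit

variable {Ω : Type} [MeasurableSpace Ω]

/-- The threshold sequence `δ_t = 2σ√(3 ln t)`. -/
def deltaNM (σ : ℝ) (t : ℕ) : ℝ := 2 * σ * Real.sqrt (3 * Real.log t)

/-- `π` is the nearly-myopic policy associated with the threshold sequence `δ`:
`π_1 = 1` and `π_{t+1} = I{X_{t+1} ≥ θ̂_π(t) − δ_t/√(T_π(t))}`. -/
structure IsNearlyMyopic (M : Model Ω) (θ : ℝ) (δ : ℕ → ℝ) (π : ℕ → Ω → ℝ) : Prop where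
  first : ∀ ω, π 1 ω = 1
  step : ∀ t ω, 1 ≤ t →
    π (t + 1) ω =
      if thetaHat M θ π t ω - δ t / Real.sqrt (Tpulls π t ω) ≤ M.X (t + 1) ω then 1 else 0

/-- `t₀ = min{t ∈ {1,…,n} : x₀√(pt) ≥ 8σ√(3 ln t)}`. -/
def tZero (σ x0 p : ℝ) (n : ℕ) : ℕ :=
  sInf {t : ℕ | t ∈ Finset.Icc 1 n ∧
    8 * σ * Real.sqrt (3 * Real.log t) ≤ x0 * Real.sqrt (p * t)}

/-- `t_β = min{t ∈ {1,…,n} : t ≥ (8√3 σ √(ln t / p))^{4β/(β−2)}}`, for `β > 2`. -/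
def tBeta (σ p β : ℝ) (n : ℕ) : ℕ :=
  sInf {t : ℕ | t ∈ Finset.Icc 1 n ∧
    (8 * Real.sqrt 3 * σ * Real.sqrt (Real.log t / p)) ^ (4 * β / (β - 2)) ≤ (t : ℝ)}

end OneArmedBandit

/-!
If `π̂` pulls at most `zpt` times up to `t`, consider the window `(m, t]` with
`m = ⌊(1 - 2z)t⌋`. Either at most `zpt` of the covariates in the window exceed `θ`, an event of
probability at most `exp (-p²z²t/2)` by a Chernoff bound for the i.i.d. indicators
`I{X_s ≥ θ}`; or the policy skipped some `X_{k+1} ≥ θ` with `m ≤ k < t`. By the definition of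
`π̂` this means `θ̂(k) - θ > δ_k / √T(k)`, i.e. the selected noise `S_k = ∑_{s ≤ k} ε_s π_s`
satisfies `-S_k ≥ δ_m √j` at a time where `T(k) = j ≤ zpt`. For fixed `j`,
`exp (-r S_k - r² σ² T(k) / 2)` is a nonnegative mean-one martingale (`π` is predictable and
`ε_{k+1}` is Gaussian and independent of the past), so Doob's maximal inequality with the
tilt `r = δ_m / (σ² √j)` bounds this event by `exp (-δ_m² / (2σ²))`; a union bound over
`j ≤ zpt ≤ 4zt` concludes.
-/

open Finset
open scoped NNReal ENNReal

lemma MeasureTheory.Submartingale.mul_measureReal_exists_le_le {Ω : Type*}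
    {m0 : MeasurableSpace Ω} {μ : Measure Ω} [IsFiniteMeasure μ] {𝓕 : Filtration ℕ m0} {f : ℕ → Ω → ℝ}
    (hf : Submartingale f 𝓕 μ) (hnonneg : 0 ≤ f) {a : ℝ} (ha : 0 ≤ a) (n : ℕ) :
    a * μ.real {ω | ∃ k ≤ n, a ≤ f k ω} ≤ ∫ ω, f n ω ∂μ := by
  have hset : {ω | ∃ k ≤ n, a ≤ f k ω} =
      {ω | a ≤ (range (n + 1)).sup' nonempty_range_add_one fun k => f k ω} := by
    ext ω
    simp [Finset.le_sup'_iff]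
  have hdoob := ENNReal.toReal_mono ENNReal.ofReal_ne_top
    (maximal_ineq hf hnonneg (ε := a.toNNReal) n)
  rw [ENNReal.toReal_mul, ENNReal.toReal_ofReal
    (setIntegral_nonneg_of_ae_restrict (ae_of_all _ fun ω => hnonneg n ω))] at hdoob
  rw [hset, measureReal_def]
  simp only [ENNReal.coe_toReal, Real.coe_toNNReal _ ha] at hdoob
  exact hdoob.trans (setIntegral_le_integral (hf.integrable n) (ae_of_all _ (hnonneg n)))

namespace OneArmedBandit

section ExpMartingale

variable {Ω : Type} {m0 : MeasurableSpace Ω} {μ : Measure Ω} {𝓕 : Filtration ℕ m0}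
  {ε π : ℕ → Ω → ℝ} {v : ℝ≥0}

structure IsGaussianInnovation (𝓕 : Filtration ℕ m0) (ε : ℕ → Ω → ℝ) (v : ℝ≥0)
    (μ : Measure Ω) : Prop where
  adapted : ∀ k, Measurable[𝓕 k] (ε k)
  indep : ∀ k, Indep (𝓕 k) (MeasurableSpace.comap (ε (k + 1)) inferInstance) μ
  map_eq : ∀ k, μ.map (ε k) = gaussianReal 0 v

structure IsPredictableSelection (𝓕 : Filtration ℕ m0) (π : ℕ → Ω → ℝ) : Prop where
  measurable : ∀ k, Measurable[𝓕 k] (π (k + 1))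
  mem : ∀ k ω, π k ω = 0 ∨ π k ω = 1

def noiseSum (ε π : ℕ → Ω → ℝ) (k : ℕ) (ω : Ω) : ℝ := ∑ s ∈ Icc 1 k, ε s ω * π s ω

def expNoise (ε π : ℕ → Ω → ℝ) (v r : ℝ) (k : ℕ) (ω : Ω) : ℝ :=
  Real.exp (-(r * noiseSum ε π k ω) - r ^ 2 * v * Tpulls π k ω / 2)

lemma Tpulls_succ (π : ℕ → Ω → ℝ) (k : ℕ) (ω : Ω) :
    Tpulls π (k + 1) ω = Tpulls π k ω + π (k + 1) ω := by
  rw [Tpulls, Tpulls, ← sum_Icc_succ_top (by omega)]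

lemma noiseSum_succ (ε π : ℕ → Ω → ℝ) (k : ℕ) (ω : Ω) :
    noiseSum ε π (k + 1) ω = noiseSum ε π k ω + ε (k + 1) ω * π (k + 1) ω := by
  rw [noiseSum, noiseSum, ← sum_Icc_succ_top (by omega)]

lemma expNoise_zero (ε π : ℕ → Ω → ℝ) (v r : ℝ) : expNoise ε π v r 0 = 1 := by
  ext ω
  simp [expNoise, noiseSum, Tpulls]

lemma expNoise_succ {k : ℕ} (hπ : ∀ ω, π (k + 1) ω = 0 ∨ π (k + 1) ω = 1) (v r : ℝ) (ω : Ω) :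
    expNoise ε π v r (k + 1) ω = expNoise ε π v r k ω * (1 - π (k + 1) ω) +
      expNoise ε π v r k ω * π (k + 1) ω * Real.exp (-(r ^ 2 * v) / 2) *
        Real.exp (-r * ε (k + 1) ω) := by
  rcases hπ ω with h | h
  · simp [expNoise, noiseSum_succ, Tpulls_succ, h]
  · simp only [expNoise, noiseSum_succ, Tpulls_succ, h, sub_self, mul_zero, zero_add, mul_one]
    rw [← Real.exp_add, ← Real.exp_add]
    ring_nf

namespace IsPredictableSelection

lemma measurable_of_le (hπ : IsPredictableSelection 𝓕 π) {s k : ℕ} (hs : 1 ≤ s) (hsk : s ≤ k) :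
    Measurable[𝓕 k] (π s) := by
  obtain ⟨s, rfl⟩ := Nat.exists_eq_add_of_le' hs
  exact (hπ.measurable s).mono (𝓕.mono (by omega)) le_rfl

lemma nonneg (hπ : IsPredictableSelection 𝓕 π) (k : ℕ) (ω : Ω) : 0 ≤ π k ω := by
  rcases hπ.mem k ω with h | h <;> simp [h]

lemma le_one (hπ : IsPredictableSelection 𝓕 π) (k : ℕ) (ω : Ω) : π k ω ≤ 1 := by
  rcases hπ.mem k ω with h | h <;> simp [h]

lemma monotone_Tpulls (hπ : IsPredictableSelection 𝓕 π) (ω : Ω) :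
    Monotone fun k => Tpulls π k ω := fun _ _ hkl =>
  sum_le_sum_of_subset_of_nonneg (Icc_subset_Icc le_rfl hkl) fun s _ _ => hπ.nonneg s ω

lemma measurable_Tpulls (hπ : IsPredictableSelection 𝓕 π) (k : ℕ) :
    Measurable[𝓕 k] (Tpulls π k) := by
  refine Finset.measurable_fun_sum _ fun s hs => ?_
  rw [mem_Icc] at hs
  exact hπ.measurable_of_le hs.1 hs.2

lemma measurable_noiseSum (hπ : IsPredictableSelection 𝓕 π) (hε : ∀ k, Measurable[𝓕 k] (ε k))
    (k : ℕ) : Measurable[𝓕 k] (noiseSum ε π k) := by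
  refine Finset.measurable_fun_sum _ fun s hs => ?_
  rw [mem_Icc] at hs
  exact ((hε s).mono (𝓕.mono hs.2) le_rfl).mul (hπ.measurable_of_le hs.1 hs.2)

lemma measurable_expNoise (hπ : IsPredictableSelection 𝓕 π)
    (hε : ∀ k, Measurable[𝓕 k] (ε k)) (v r : ℝ) (k : ℕ) :
    Measurable[𝓕 k] (expNoise ε π v r k) :=
  (((hπ.measurable_noiseSum hε k).const_mul r).neg.sub
    (((hπ.measurable_Tpulls k).const_mul _).div_const 2)).exp

end IsPredictableSelection

variable [IsProbabilityMeasure μ]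

lemma IsGaussianInnovation.integral_mul_exp (hε : IsGaussianInnovation 𝓕 ε v μ) {k : ℕ}
    {g : Ω → ℝ} (hg : Measurable[𝓕 k] g) (hgi : Integrable g μ) (r : ℝ) :
    Integrable (fun ω => g ω * Real.exp (r * ε (k + 1) ω)) μ ∧
      ∫ ω, g ω * Real.exp (r * ε (k + 1) ω) ∂μ = (∫ ω, g ω ∂μ) * Real.exp (v * r ^ 2 / 2) := by
  have hmgf : mgf (ε (k + 1)) μ r = Real.exp (v * r ^ 2 / 2) := by
    simpa using mgf_gaussianReal (hε.map_eq (k + 1)) r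
  have hint : Integrable (fun ω => Real.exp (r * ε (k + 1) ω)) μ := by
    rw [← mgf_pos_iff, hmgf]
    exact Real.exp_pos _
  have hexp : Measurable[MeasurableSpace.comap (ε (k + 1)) inferInstance]
      (fun ω => Real.exp (r * ε (k + 1) ω)) :=
    (measurable_id.const_mul r).exp.comp (Measurable.of_comap_le le_rfl)
  have hind : IndepFun g (fun ω => Real.exp (r * ε (k + 1) ω)) μ := by
    rw [IndepFun_iff_Indep]
    exact indep_of_indep_of_le_left
      (indep_of_indep_of_le_right (hε.indep k) (measurable_iff_comap_le.1 hexp))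
      (measurable_iff_comap_le.1 hg)
  refine ⟨hind.integrable_mul hgi hint, ?_⟩
  rw [hind.integral_fun_mul_eq_mul_integral hgi.1 hint.1, ← hmgf, mgf]

lemma integral_mul_expNoise_succ (hε : IsGaussianInnovation 𝓕 ε v μ)
    (hπ : IsPredictableSelection 𝓕 π) (r : ℝ) {k : ℕ} {g : Ω → ℝ} (hg : Measurable[𝓕 k] g)
    (hgi : Integrable (fun ω => g ω * expNoise ε π v r k ω) μ) :
    Integrable (fun ω => g ω * expNoise ε π v r (k + 1) ω) μ ∧
      ∫ ω, g ω * expNoise ε π v r (k + 1) ω ∂μ = ∫ ω, g ω * expNoise ε π v r k ω ∂μ := by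
  set G := fun ω => g ω * expNoise ε π v r k ω
  set A := Real.exp (-(r ^ 2 * v) / 2)
  have hGπ : Integrable (fun ω => G ω * π (k + 1) ω) μ :=
    hgi.mul_bdd ((hπ.measurable k).mono (𝓕.le k) le_rfl).aestronglyMeasurable
      (ae_of_all _ fun ω => by
        rw [Real.norm_eq_abs, abs_of_nonneg (hπ.nonneg _ ω)]; exact hπ.le_one _ ω)
  have hGπc : Integrable (fun ω => G ω * (1 - π (k + 1) ω)) μ :=
    (hgi.sub hGπ).congr (ae_of_all _ fun ω => by simp only [Pi.sub_apply]; ring)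
  obtain ⟨hint, hval⟩ := hε.integral_mul_exp (g := fun ω => G ω * π (k + 1) ω * A)
    (((hg.mul (hπ.measurable_expNoise hε.adapted v r k)).mul (hπ.measurable k)).mul_const A)
    (hGπ.mul_const A) (-r)
  have hA : A * Real.exp (v * (-r) ^ 2 / 2) = 1 := by
    rw [← Real.exp_add, ← Real.exp_zero]
    ring_nf
  have hsplit : (fun ω => g ω * expNoise ε π v r (k + 1) ω) = fun ω =>
      G ω * (1 - π (k + 1) ω) + G ω * π (k + 1) ω * A * Real.exp (-r * ε (k + 1) ω) := by
    ext ω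
    rw [expNoise_succ (hπ.mem (k + 1))]
    ring
  rw [hsplit]
  refine ⟨hGπc.add hint, ?_⟩
  rw [integral_add hGπc hint, hval, integral_mul_const, mul_assoc, hA, mul_one,
    ← integral_add hGπc hGπ]
  congr 1 with ω
  ring

lemma integrable_expNoise (hε : IsGaussianInnovation 𝓕 ε v μ)
    (hπ : IsPredictableSelection 𝓕 π) (r : ℝ) (k : ℕ) :
    Integrable (expNoise ε π v r k) μ ∧ ∫ ω, expNoise ε π v r k ω ∂μ = 1 := by
  induction k with
  | zero => exact ⟨expNoise_zero ε π v r ▸ integrable_const 1, by simp [expNoise_zero]⟩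
  | succ k ih =>
    obtain ⟨hint, hval⟩ :=
      integral_mul_expNoise_succ hε hπ r (g := 1) measurable_const (by simpa using ih.1)
    simp only [Pi.one_apply, one_mul] at hint hval
    exact ⟨hint, hval.trans ih.2⟩

lemma martingale_expNoise (hε : IsGaussianInnovation 𝓕 ε v μ)
    (hπ : IsPredictableSelection 𝓕 π) (r : ℝ) : Martingale (expNoise ε π v r) 𝓕 μ := by
  refine martingale_of_setIntegral_eq_succ
    (fun k => (hπ.measurable_expNoise hε.adapted v r k).stronglyMeasurable)
    (fun k => (integrable_expNoise hε hπ r k).1) fun k s hs => ?_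
  have hind : ∀ l, (fun ω => s.indicator 1 ω * expNoise ε π v r l ω) =
      s.indicator (expNoise ε π v r l) := fun l => by
    ext ω
    by_cases h : ω ∈ s <;> simp [h]
  have hs0 : MeasurableSet s := 𝓕.le k s hs
  have := integral_mul_expNoise_succ hε hπ r (g := s.indicator 1) (measurable_const.indicator hs)
    (by rw [hind]; exact (integrable_expNoise hε hπ r k).1.indicator hs0)
  rw [hind, hind, integral_indicator hs0, integral_indicator hs0] at this
  exact this.2.symm

lemma measureReal_exists_Tpulls_eq_noiseSum_le (hε : IsGaussianInnovation 𝓕 ε v μ)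
    (hπ : IsPredictableSelection 𝓕 π) (hv : v ≠ 0) (n : ℕ) {j : ℕ} (hj : 1 ≤ j) {c : ℝ}
    (hc : 0 ≤ c) :
    μ.real {ω | ∃ k ≤ n, Tpulls π k ω = j ∧ c * √j ≤ -noiseSum ε π k ω} ≤
      Real.exp (-(c ^ 2 / (2 * v))) := by
  have hv0 : (0 : ℝ) < v := by positivity
  have hj0 : (0 : ℝ) < √j := Real.sqrt_pos.2 (by exact_mod_cast hj)
  -- `r` maximises the exponent `r c √j - r² v j / 2` reached by the martingale on the event
  set r := c / (v * √j)
  have hr : 0 ≤ r := by positivity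
  have hexponent : r * (c * √j) - r ^ 2 * v * j / 2 = c ^ 2 / (2 * v) := by
    simp only [r]
    rw [div_pow, mul_pow, Real.sq_sqrt (Nat.cast_nonneg j)]
    field_simp
    ring
  have hsub : {ω | ∃ k ≤ n, Tpulls π k ω = j ∧ c * √j ≤ -noiseSum ε π k ω} ⊆
      {ω | ∃ k ≤ n, Real.exp (c ^ 2 / (2 * v)) ≤ expNoise ε π v r k ω} := by
    rintro ω ⟨k, hk, hT, hS⟩
    refine ⟨k, hk, Real.exp_le_exp.2 ?_⟩
    change _ ≤ -(r * noiseSum ε π k ω) - r ^ 2 * v * Tpulls π k ω / 2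
    rw [hT]
    nlinarith [mul_le_mul_of_nonneg_left hS hr]
  have hdoob := (martingale_expNoise hε hπ r).submartingale.mul_measureReal_exists_le_le
    (fun k ω => (Real.exp_pos _).le) (Real.exp_pos (c ^ 2 / (2 * v))).le n
  rw [(integrable_expNoise hε hπ r n).2] at hdoob
  calc μ.real _ ≤ μ.real {ω | ∃ k ≤ n, Real.exp (c ^ 2 / (2 * v)) ≤ expNoise ε π v r k ω} :=
        measureReal_mono hsub
    _ ≤ (Real.exp (c ^ 2 / (2 * v)))⁻¹ := by
        rw [← one_div, le_div_iff₀' (Real.exp_pos _)]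
        exact hdoob
    _ = Real.exp (-(c ^ 2 / (2 * v))) := (Real.exp_neg _).symm

end ExpMartingale

namespace Model

variable {Ω : Type} [MeasurableSpace Ω] (M : Model Ω)

lemma measurable_elim : ∀ i, Measurable (Sum.elim M.X M.eps i)
  | .inl s => M.meas_X s
  | .inr s => M.meas_eps s

def filtrationIdx (k : ℕ) : Set (ℕ ⊕ ℕ) := Set.range Sum.inl ∪ Sum.inr '' Set.Iic k

/-- `M.filtration k` is generated by all covariates and by `ε_0, …, ε_k`: it contains the
information on which `π_{k+1}` may depend, while `ε_{k+1}` stays independent of it. -/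
def filtration_s15 : Filtration ℕ ‹MeasurableSpace Ω› where
  seq k := ⨆ i ∈ filtrationIdx k, MeasurableSpace.comap (Sum.elim M.X M.eps i) inferInstance
  mono' _ _ hkl :=
    biSup_mono (Set.union_subset_union_right _ (Set.image_mono (Set.Iic_subset_Iic.2 hkl)))
  le' _ := iSup₂_le fun i _ => (M.measurable_elim i).comap_le

lemma measurable_elim_filtration {k : ℕ} {i : ℕ ⊕ ℕ} (hi : i ∈ filtrationIdx k) :
    Measurable[M.filtration_s15 k] (Sum.elim M.X M.eps i) :=
  measurable_iff_comap_le.2 <| le_iSup₂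
    (f := fun i (_ : i ∈ filtrationIdx k) =>
      MeasurableSpace.comap (Sum.elim M.X M.eps i) inferInstance) i hi

lemma measurable_X_filtration_s15 (k s : ℕ) : Measurable[M.filtration_s15 k] (M.X s) :=
  M.measurable_elim_filtration (i := .inl s) (Or.inl ⟨s, rfl⟩)

lemma measurable_eps_filtration {k s : ℕ} (h : s ≤ k) : Measurable[M.filtration_s15 k] (M.eps s) :=
  M.measurable_elim_filtration (i := .inr s) (Or.inr ⟨s, h, rfl⟩)

lemma isGaussianInnovation :
    IsGaussianInnovation M.filtration_s15 M.eps ⟨M.σ ^ 2, sq_nonneg M.σ⟩ M.P where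
  adapted _ := M.measurable_eps_filtration le_rfl
  indep k := by
    have hdisj : Disjoint (filtrationIdx k) {Sum.inr (k + 1)} := by
      rw [Set.disjoint_singleton_right]
      rintro (⟨n, hn⟩ | ⟨n, hn, hn'⟩)
      · cases hn
      · cases Sum.inr.inj hn'
        simp at hn
    simpa [filtration_s15] using indep_iSup_of_disjoint (fun i => (M.measurable_elim i).comap_le)
      ((iIndepFun_iff_iIndep _ _ _).1 M.indep) hdisj
  map_eq := M.law_eps

lemma measurable_oracle (θ : ℝ) (s : ℕ) : Measurable (oracle M θ s) :=
  (measurable_const.ite measurableSet_Ici measurable_const).comp (M.meas_X s)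

lemma iIndepFun_oracle (θ : ℝ) : iIndepFun (oracle M θ) M.P :=
  (M.indep.precomp Sum.inl_injective).comp (fun _ x => if θ ≤ x then (1 : ℝ) else 0)
    fun _ => measurable_const.ite measurableSet_Ici measurable_const

lemma mgf_oracle (θ : ℝ) (s : ℕ) :
    mgf (oracle M θ s) M.P (-1) = 1 - (1 - Real.exp (-1)) * (M.PX (Set.Ici θ)).toReal := by
  have := M.isProb
  have hpre : M.P.real (M.X s ⁻¹' Set.Ici θ) = (M.PX (Set.Ici θ)).toReal := by
    rw [← M.law_X s, measureReal_def, Measure.map_apply (M.meas_X s) measurableSet_Ici]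
  have hmeas : MeasurableSet (M.X s ⁻¹' Set.Ici θ) := M.meas_X s measurableSet_Ici
  have hfun : (fun ω => Real.exp (-1 * oracle M θ s ω)) =
      fun ω => 1 - (1 - Real.exp (-1)) * (M.X s ⁻¹' Set.Ici θ).indicator 1 ω := by
    ext ω
    by_cases h : θ ≤ M.X s ω <;> simp [oracle, h]
  rw [mgf, hfun, integral_sub (integrable_const _)
    (((integrable_const 1).indicator hmeas).const_mul _), integral_const_mul,
    integral_indicator_one hmeas, hpre]
  simp

lemma measureReal_sum_oracle_le (θ : ℝ) (S : Finset ℕ) (c : ℝ) :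
    M.P.real {ω | ∑ s ∈ S, oracle M θ s ω ≤ c} ≤
      Real.exp (c - (1 - Real.exp (-1)) * (M.PX (Set.Ici θ)).toReal * #S) := by
  have := M.isProb
  set a := (1 - Real.exp (-1)) * (M.PX (Set.Ici θ)).toReal
  have horacle : ∀ s ω, 0 ≤ oracle M θ s ω := fun s ω => by
    unfold oracle; split_ifs <;> norm_num
  have hint : Integrable (fun ω => Real.exp (-1 * (∑ s ∈ S, oracle M θ s) ω)) M.P := by
    simp only [Finset.sum_apply]
    refine .of_bound (((Finset.measurable_fun_sum S fun s _ => M.measurable_oracle θ s).const_mul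
      (-1)).exp.aestronglyMeasurable) 1 (ae_of_all _ fun ω => ?_)
    rw [Real.norm_eq_abs, abs_of_pos (Real.exp_pos _), Real.exp_le_one_iff]
    nlinarith [sum_nonneg fun s (_ : s ∈ S) => horacle s ω]
  have hchernoff := measure_le_le_exp_mul_mgf c (by norm_num) hint
  rw [(M.iIndepFun_oracle θ).mgf_sum (M.measurable_oracle θ),
    prod_congr rfl fun s _ => M.mgf_oracle θ s, prod_const] at hchernoff
  have ha : 1 - a ≤ Real.exp (-a) := by linarith [Real.add_one_le_exp (-a)]
  have ha0 : 0 ≤ 1 - a := M.mgf_oracle θ 0 ▸ mgf_nonneg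
  calc M.P.real {ω | ∑ s ∈ S, oracle M θ s ω ≤ c} ≤ Real.exp c * (1 - a) ^ #S := by
        simpa [Finset.sum_apply] using hchernoff
    _ ≤ Real.exp c * Real.exp (-a) ^ #S := by gcongr
    _ = Real.exp (c - a * #S) := by rw [← Real.exp_nat_mul, ← Real.exp_add]; ring_nf

end Model

variable {Ω : Type} [MeasurableSpace Ω] {M : Model Ω} {θ : ℝ} {π : ℕ → Ω → ℝ}

lemma IsPolicy.isPredictableSelection (hπ : IsPolicy M θ π) :
    IsPredictableSelection M.filtration_s15 π where
  mem := hπ.vals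
  measurable k := by
    induction k using Nat.strong_induction_on with
    | _ k ih =>
    have hπk : ∀ u ∈ Icc 1 k, Measurable[M.filtration_s15 k] (π u) := fun u hu => by
      obtain ⟨u, rfl⟩ := Nat.exists_eq_add_of_le' (mem_Icc.1 hu).1
      exact (ih u (by simp at hu; omega)).mono (M.filtration_s15.mono (by simp at hu; omega)) le_rfl
    have hF : Fplus M θ π k ≤ M.filtration_s15 k := by
      refine sup_le (sup_le ?_ ?_) ?_ <;> refine iSup₂_le fun u hu => measurable_iff_comap_le.1 ?_
      · exact M.measurable_X_filtration_s15 k u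
      · exact hπk u hu
      · exact (hπk u hu).mul (((M.measurable_X_filtration_s15 k u).sub_const θ).add
          (M.measurable_eps_filtration (mem_Icc.1 hu).2))
    simpa using (hπ.adapted (k + 1) (by omega)).mono hF le_rfl

lemma thetaHat_eq_sub (M : Model Ω) (θ : ℝ) (π : ℕ → Ω → ℝ) (k : ℕ) (ω : Ω)
    (hT : Tpulls π k ω ≠ 0) :
    thetaHat M θ π k ω = θ - noiseSum M.eps π k ω / Tpulls π k ω := by
  have hsum : ∑ s ∈ Icc 1 k, (M.X s ω - M.Y θ s ω) * π s ω =
      θ * Tpulls π k ω - noiseSum M.eps π k ω := by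
    simp only [Tpulls, noiseSum, mul_sum, ← sum_sub_distrib, Model.Y]
    exact sum_congr rfl fun s _ => by ring
  rw [thetaHat, hsum]
  field_simp

lemma IsPolicy.exists_Tpulls_eq_natCast (hπ : IsPolicy M θ π) (k : ℕ) (ω : Ω) :
    ∃ n : ℕ, Tpulls π k ω = n := by
  induction k with
  | zero => exact ⟨0, by simp [Tpulls]⟩
  | succ k ih =>
    obtain ⟨n, hn⟩ := ih
    rcases hπ.vals (k + 1) ω with h | h
    · exact ⟨n, by rw [Tpulls_succ, hn, h, add_zero]⟩
    · exact ⟨n + 1, by rw [Tpulls_succ, hn, h]; push_cast; ring⟩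

lemma IsNearlyMyopic.one_le_Tpulls {δ : ℕ → ℝ} (hnm : IsNearlyMyopic M θ δ π)
    (hπ : IsPolicy M θ π) {k : ℕ} (hk : 1 ≤ k) (ω : Ω) : 1 ≤ Tpulls π k ω := by
  have h1 : Tpulls π 1 ω = 1 := by simp [Tpulls, hnm.first ω]
  exact h1 ▸ hπ.isPredictableSelection.monotone_Tpulls ω hk

lemma IsNearlyMyopic.mul_sqrt_Tpulls_lt {δ : ℕ → ℝ} (hnm : IsNearlyMyopic M θ δ π)
    (hπ : IsPolicy M θ π) {k : ℕ} (hk : 1 ≤ k) {ω : Ω} (hskip : π (k + 1) ω = 0)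
    (hX : θ ≤ M.X (k + 1) ω) : δ k * √(Tpulls π k ω) < -noiseSum M.eps π k ω := by
  set T := Tpulls π k ω
  have hT : 0 < T := by linarith [hnm.one_le_Tpulls hπ hk ω]
  have hsqrt : 0 < √T := Real.sqrt_pos.2 hT
  have hreject : M.X (k + 1) ω < thetaHat M θ π k ω - δ k / √T := by
    by_contra h
    have := hnm.step k ω hk
    rw [if_pos (not_lt.1 h), hskip] at this
    exact zero_ne_one this
  rw [thetaHat_eq_sub M θ π k ω hT.ne'] at hreject
  have key : δ k / √T < -noiseSum M.eps π k ω / T := by rw [neg_div]; linarith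
  calc δ k * √T = δ k / √T * T := by
        rw [div_mul_eq_mul_div, eq_div_iff hsqrt.ne', mul_assoc, Real.mul_self_sqrt hT.le]
    _ < -noiseSum M.eps π k ω / T * T := mul_lt_mul_of_pos_right key hT
    _ = -noiseSum M.eps π k ω := div_mul_cancel₀ _ hT.ne'

lemma IsNearlyMyopic.setOf_Tpulls_le_subset {δ : ℕ → ℝ} (hnm : IsNearlyMyopic M θ δ π)
    (hπ : IsPolicy M θ π) (hδ : Monotone δ) {m : ℕ} (hm : 1 ≤ m) (t : ℕ) (c : ℝ) :
    {ω | Tpulls π t ω ≤ c} ⊆ {ω | ∑ s ∈ Icc (m + 1) t, oracle M θ s ω ≤ c} ∪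
      ⋃ j ∈ Icc 1 ⌊c⌋₊,
        {ω | ∃ k ≤ t, Tpulls π k ω = j ∧ δ m * √j ≤ -noiseSum M.eps π k ω} := by
  intro ω hT
  refine or_iff_not_imp_left.2 fun hB => ?_
  simp only [Set.mem_ofPred_eq, not_le] at hB hT
  have hπ' := hπ.isPredictableSelection
  have hπsum : ∑ s ∈ Icc (m + 1) t, π s ω ≤ c :=
    (sum_le_sum_of_subset_of_nonneg (Icc_subset_Icc (by omega) le_rfl)
      fun s _ _ => hπ'.nonneg s ω).trans hT
  obtain ⟨s, hs, hlt⟩ := exists_lt_of_sum_lt (hπsum.trans_lt hB)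
  obtain ⟨k, rfl⟩ : ∃ k, s = k + 1 := ⟨s - 1, by simp at hs; omega⟩
  have hk : m ≤ k ∧ k + 1 ≤ t := by simpa using hs
  have hskip : π (k + 1) ω = 0 ∧ θ ≤ M.X (k + 1) ω := by
    unfold oracle at hlt
    split_ifs at hlt with hX
    · exact ⟨(hπ.vals _ ω).resolve_right hlt.ne, hX⟩
    · exact absurd hlt (not_lt.2 (hπ'.nonneg _ ω))
  obtain ⟨j, hj⟩ := hπ.exists_Tpulls_eq_natCast k ω
  have hT1 := hnm.one_le_Tpulls hπ (hm.trans hk.1) ω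
  refine Set.mem_iUnion₂.2 ⟨j, mem_Icc.2 ⟨?_, Nat.le_floor ?_⟩, k, by omega, hj, ?_⟩
  · exact_mod_cast hj ▸ hT1
  · exact hj ▸ (hπ'.monotone_Tpulls ω (by omega : k ≤ t)).trans hT
  · rw [← hj]
    exact (mul_le_mul_of_nonneg_right (hδ hk.1) (Real.sqrt_nonneg _)).trans
      (hnm.mul_sqrt_Tpulls_lt hπ (hm.trans hk.1) hskip.1 hskip.2).le

lemma floor_one_sub_two_mul_bounds {z : ℝ} (hz : z ∈ Set.Ioc (0 : ℝ) (1 / 4)) {t : ℕ}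
    (ht : 2 ≤ t) :
    1 ≤ ⌊(1 - 2 * z) * (t : ℝ)⌋₊ ∧
      2 * z * t ≤ ((t - ⌊(1 - 2 * z) * (t : ℝ)⌋₊ : ℕ) : ℝ) := by
  obtain ⟨hz0, hz4⟩ := hz
  have ht' : (2 : ℝ) ≤ t := by exact_mod_cast ht
  have hfloor : (⌊(1 - 2 * z) * (t : ℝ)⌋₊ : ℝ) ≤ (1 - 2 * z) * t :=
    Nat.floor_le (by nlinarith)
  have hmt : ⌊(1 - 2 * z) * (t : ℝ)⌋₊ ≤ t := Nat.floor_le_of_le (by nlinarith)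
  refine ⟨Nat.le_floor (by push_cast; nlinarith), ?_⟩
  rw [Nat.cast_sub hmt]
  linarith

lemma chernoff_exponent_le {p q z t d : ℝ} (hp : p ∈ Set.Ioo (0 : ℝ) 1) (hpq : p ≤ q)
    (hz : z ∈ Set.Ioc (0 : ℝ) (1 / 4)) (ht : 0 ≤ t) (hd : 2 * z * t ≤ d) :
    z * p * t - (1 - Real.exp (-1)) * q * d ≤ -(p ^ 2 * z ^ 2 * t) / 2 := by
  obtain ⟨hp0, hp1⟩ := hp
  obtain ⟨hz0, hz4⟩ := hz
  have he : 5 / 8 ≤ 1 - Real.exp (-1) := by linarith [Real.exp_neg_one_lt_d9]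
  have hqd : 5 / 8 * p * (2 * z * t) ≤ (1 - Real.exp (-1)) * q * d :=
    mul_le_mul (mul_le_mul he hpq hp0.le (by linarith)) hd (by positivity) (by nlinarith)
  have hpz : p * z ≤ 1 / 2 := by nlinarith
  nlinarith [mul_nonneg (mul_nonneg (mul_nonneg hp0.le hz0.le) ht) (sub_nonneg.2 hpz)]

/-- Lemma 2: if `p ≤ P_X([θ,∞)) < 1` and `(δ_t)` is a nondecreasing sequence of
positive reals, then for the nearly-myopic policy `π̂` associated with `δ`, for any
`z ∈ (0, 1/4]` and any `t ≥ 2`,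
`P(T_π̂(t) ≤ zpt) ≤ exp(−p²z²t/2) + 4zt exp(−δ²_{⌊(1−2z)t⌋}/(4σ²))`. -/
theorem lemma2_pulls_lower (Ω : Type) [MeasurableSpace Ω] (M : Model Ω) (θ p : ℝ)
    (hp : p ∈ Set.Ioo (0 : ℝ) 1)
    (hp_le : p ≤ (M.PX (Set.Ici θ)).toReal)
    (δ : ℕ → ℝ) (hδpos : ∀ t, 0 < δ t) (hδmono : Monotone δ)
    (π : ℕ → Ω → ℝ) (hπ : IsPolicy M θ π) (hnm : IsNearlyMyopic M θ δ π)
    (z : ℝ) (hz : z ∈ Set.Ioc (0 : ℝ) (1 / 4)) (t : ℕ) (ht : 2 ≤ t) :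
    (M.P {ω | Tpulls π t ω ≤ z * p * t}).toReal ≤
      Real.exp (-(p ^ 2 * z ^ 2 * t) / 2) +
        4 * z * t *
          Real.exp (-(δ ⌊(1 - 2 * z) * (t : ℝ)⌋₊) ^ 2 / (4 * M.σ ^ 2)) := by
  have := M.isProb
  set m := ⌊(1 - 2 * z) * (t : ℝ)⌋₊
  obtain ⟨hm1, hgap⟩ := floor_one_sub_two_mul_bounds hz ht
  have hσ : 0 < M.σ ^ 2 := pow_pos M.σ_pos 2
  have hnoise : ∀ j ∈ Icc 1 ⌊z * p * t⌋₊, M.P.real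
      {ω | ∃ k ≤ t, Tpulls π k ω = j ∧ δ m * √j ≤ -noiseSum M.eps π k ω} ≤
        Real.exp (-(δ m ^ 2 / (2 * M.σ ^ 2))) := fun j hj =>
    measureReal_exists_Tpulls_eq_noiseSum_le M.isGaussianInnovation hπ.isPredictableSelection
      (fun h => hσ.ne' (congrArg NNReal.toReal h)) t (mem_Icc.1 hj).1 (hδpos m).le
  rw [← measureReal_def]
  refine (measureReal_mono (hnm.setOf_Tpulls_le_subset hπ hδmono hm1 t _)).trans <|
    (measureReal_union_le _ _).trans <| add_le_add ?_ <|
      (measureReal_biUnion_finset_le _ _).trans <| (sum_le_card_nsmul _ _ _ hnoise).trans ?_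
  · refine (M.measureReal_sum_oracle_le θ _ _).trans (Real.exp_le_exp.2 ?_)
    rw [Nat.card_Icc, Nat.add_sub_add_right]
    exact chernoff_exponent_le hp hp_le hz (Nat.cast_nonneg t) hgap
  · have hzt : 0 ≤ z * t := mul_nonneg hz.1.le (Nat.cast_nonneg t)
    have hJ : (⌊z * p * t⌋₊ : ℝ) ≤ 4 * z * t := (Nat.floor_le (by nlinarith [hp.1])).trans
      (by nlinarith [mul_nonneg hzt (sub_nonneg.2 hp.2.le)])
    rw [Nat.card_Icc, Nat.add_sub_cancel, nsmul_eq_mul, neg_div]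
    gcongr
    · linarith
    · norm_num

end OneArmedBandit
end
end

section
/- (Analytic bound on the dyadic Gaussian-tail series.) For every b > 0 and every α with 0 < α ≤ 2b, the series S(α, b) := Σ_{k=0}^∞ 2^{−αk} exp( −b·2^{−2k} ) satisfies S(α, b) ≤ b^{−α/2} [ (α/2)^{α/2} / (1 − 2^{−α}) + Γ(α/2) / (2 ln 2) ], where Γ denotes the gamma function. -/
/-!
With `s = α / 2` and `x = log b - 2 k log 2`, the `k`-th term is `b^{-s} e^{s x - eˣ}`. The
function `x ↦ e^{s x - eˣ}` increases up to `x = log s` and decreases after it, its maximum is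
`s^s e^{-s}`, and its integral over `ℝ` is `Γ(s)` (substitute `u = eˣ`).

For a nonnegative integrable `f` that increases up to a mode `c` and decreases after it, the sum
of `f` over the naturals is at most `∫ f + sup f`: a term left of `c` is bounded by the integral
over the unit interval to its right, a term right of `c` by the one to its left, and the two terms
`f m`, `f (m + 1)` around the mode share `[m, m + 1]`, on which `f ≥ min (f m) (f (m + 1))`, so
`f m + f (m + 1) ≤ sup f + ∫_m^{m+1} f`. The extra `e^{-s}` is then absorbed by
`e^{-s} ≤ 1 ≤ 1 / (1 - 2^{-α})`.
-/

open MeasureTheory Set Real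

def IsUnimodalAt (f : ℝ → ℝ) (c : ℝ) : Prop :=
  MonotoneOn f (Iic c) ∧ AntitoneOn f (Ici c)

namespace IsUnimodalAt

variable {f : ℝ → ℝ} {c : ℝ}

theorem const_mul (hf : IsUnimodalAt f c) {C : ℝ} (hC : 0 ≤ C) :
    IsUnimodalAt (fun x => C * f x) c :=
  ⟨fun _ hx _ hy hxy => mul_le_mul_of_nonneg_left (hf.1 hx hy hxy) hC,
    fun _ hx _ hy hxy => mul_le_mul_of_nonneg_left (hf.2 hx hy hxy) hC⟩

theorem comp_sub_mul (hf : IsUnimodalAt f c) (L : ℝ) {κ : ℝ} (hκ : 0 < κ) :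
    IsUnimodalAt (fun y => f (L - κ * y)) ((L - c) / κ) := by
  have hIci : ∀ y, y ≤ (L - c) / κ → L - κ * y ∈ Ici c := fun y hy => by
    rw [le_div_iff₀ hκ] at hy; simp only [mem_Ici]; linarith
  have hIic : ∀ y, (L - c) / κ ≤ y → L - κ * y ∈ Iic c := fun y hy => by
    rw [div_le_iff₀ hκ] at hy; simp only [mem_Iic]; linarith
  exact ⟨fun x _ y hy hxy => hf.2 (hIci y hy) (hIci x (hxy.trans hy)) (by nlinarith),
    fun x hx y _ hxy => hf.1 (hIic y (le_trans hx hxy)) (hIic x hx) (by nlinarith)⟩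

theorem min_le (hf : IsUnimodalAt f c) {a b y : ℝ} (hay : a ≤ y) (hyb : y ≤ b) :
    min (f a) (f b) ≤ f y := by
  rcases le_total y c with hyc | hcy
  · exact min_le_of_left_le (hf.1 (hay.trans hyc) hyc hay)
  · exact min_le_of_right_le (hf.2 hcy (hcy.trans hyb) hyb)

theorem min_le_intervalIntegral (hf : IsUnimodalAt f c) {a : ℝ}
    (hint : IntervalIntegrable f volume a (a + 1)) :
    min (f a) (f (a + 1)) ≤ ∫ x in a..a + 1, f x := by
  simpa using intervalIntegral.integral_mono_on (by linarith) intervalIntegrable_const hint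
    fun y hy => hf.min_le hy.1 hy.2

theorem sum_range_le_integral_add (hf : IsUnimodalAt f c) (hint : Integrable f)
    (hf0 : 0 ≤ f) {M : ℝ} (hM : ∀ x, f x ≤ M) (N : ℕ) :
    ∑ k ∈ Finset.range N, f k ≤ (∫ x, f x) + M := by
  set m := ⌊c⌋₊
  set I : ℕ → ℝ := fun k => ∫ x in (k : ℝ)..(k : ℝ) + 1, f x
  have hcell : ∀ k : ℕ, min (f k) (f (k + 1)) ≤ I k :=
    fun k => hf.min_le_intervalIntegral hint.intervalIntegrable
  have hcells : ∀ K : ℕ, ∑ k ∈ Finset.range K, I k ≤ ∫ x, f x := by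
    intro K
    have hadj := intervalIntegral.sum_integral_adjacent_intervals (a := fun k : ℕ => (k : ℝ))
      (fun k _ => hint.intervalIntegrable) (μ := volume) (n := K)
    push_cast at hadj
    rw [hadj, intervalIntegral.integral_of_le K.cast_nonneg]
    exact setIntegral_le_integral hint (Filter.Eventually.of_forall hf0)
  have hleft : ∀ k < m, f k ≤ I k := by
    intro k hk
    have hkc : (k : ℝ) + 1 ≤ c := by exact_mod_cast (Nat.le_floor_iff' k.succ_ne_zero).1 hk
    exact (le_min le_rfl (hf.1 (show (k : ℝ) ≤ c by linarith) hkc (by linarith))).trans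
      (hcell k)
  have hright : ∀ j : ℕ, f (m + 2 + j : ℕ) ≤ I (m + 1 + j) := by
    intro j
    have hc : c ≤ ((m + 1 + j : ℕ) : ℝ) := by
      push_cast; linarith [Nat.lt_floor_add_one c, (j.cast_nonneg : (0:ℝ) ≤ j)]
    have hsucc : ((m + 2 + j : ℕ) : ℝ) = ((m + 1 + j : ℕ) : ℝ) + 1 := by push_cast; ring
    rw [hsucc]
    exact (le_min (hf.2 hc (show c ≤ ((m + 1 + j : ℕ) : ℝ) + 1 by linarith) (by linarith))
      le_rfl).trans (hcell _)
  have hpeak : f m + f (m + 1) ≤ M + I m := by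
    rw [← min_add_max]
    linarith [hcell m, max_le (hM m) (hM (m + 1))]
  calc ∑ k ∈ Finset.range N, f k ≤ ∑ k ∈ Finset.range (m + 2 + N), f k :=
        Finset.sum_le_sum_of_subset_of_nonneg (Finset.range_subset_range.2 (by omega))
          fun k _ _ => hf0 k
    _ = ∑ k ∈ Finset.range m, f k + (f m + f (m + 1)) +
          ∑ j ∈ Finset.range N, f (m + 2 + j : ℕ) := by
        rw [Finset.sum_range_add, Finset.sum_range_succ, Finset.sum_range_succ]
        push_cast; ring
    _ ≤ ∑ k ∈ Finset.range m, I k + (M + I m) + ∑ j ∈ Finset.range N, I (m + 1 + j) := by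
        gcongr with k hk j
        · exact hleft k (Finset.mem_range.1 hk)
        · exact hright j
    _ = M + ∑ k ∈ Finset.range (m + 1 + N), I k := by
        rw [Finset.sum_range_add, Finset.sum_range_succ]; ring
    _ ≤ (∫ x, f x) + M := by linarith [hcells (m + 1 + N)]

theorem tsum_le_integral_add (hf : IsUnimodalAt f c) (hint : Integrable f)
    (hf0 : 0 ≤ f) {M : ℝ} (hM : ∀ x, f x ≤ M) :
    ∑' k : ℕ, f k ≤ (∫ x, f x) + M :=
  Real.tsum_le_of_sum_range_le (fun k => hf0 k) (hf.sum_range_le_integral_add hint hf0 hM)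

end IsUnimodalAt

theorem integral_comp_sub_mul_of_pos (g : ℝ → ℝ) (L : ℝ) {κ : ℝ} (hκ : 0 < κ) :
    ∫ y, g (L - κ * y) = κ⁻¹ * ∫ x, g x := by
  rw [Measure.integral_comp_mul_left (fun z => g (L - z)), integral_sub_left_eq_self,
    abs_of_pos (inv_pos.2 hκ), smul_eq_mul]

/-- The integrand of `Γ(s) = ∫₀^∞ e^{-u} u^{s-1} du` after the substitution `u = eˣ`. -/
noncomputable def expGammaIntegrand (s x : ℝ) : ℝ :=
  exp (s * x - exp x)

section expGammaIntegrand

variable {s : ℝ}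

theorem expGammaIntegrand_nonneg (s x : ℝ) : 0 ≤ expGammaIntegrand s x :=
  (exp_pos _).le

theorem abs_exp_smul_gammaIntegrand (s x : ℝ) :
    |exp x| • (exp (-exp x) * exp x ^ (s - 1)) = expGammaIntegrand s x := by
  rw [abs_of_pos (exp_pos x), smul_eq_mul, rpow_def_of_pos (exp_pos x), log_exp,
    ← exp_add, ← exp_add, expGammaIntegrand]
  ring_nf

theorem integral_expGammaIntegrand (hs : 0 < s) : ∫ x, expGammaIntegrand s x = Gamma s := by
  have := integral_image_eq_integral_abs_deriv_smul MeasurableSet.univ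
    (fun x _ => (hasDerivAt_exp x).hasDerivWithinAt) exp_injective.injOn
    (fun u => exp (-u) * u ^ (s - 1))
  rw [image_univ, range_exp, ← Gamma_eq_integral hs, setIntegral_univ] at this
  simpa only [abs_exp_smul_gammaIntegrand] using this.symm

theorem integrable_expGammaIntegrand (hs : 0 < s) : Integrable (expGammaIntegrand s) := by
  have := (integrableOn_image_iff_integrableOn_abs_deriv_smul MeasurableSet.univ
    (fun x _ => (hasDerivAt_exp x).hasDerivWithinAt) exp_injective.injOn
    (fun u => exp (-u) * u ^ (s - 1))).1
  rw [image_univ, range_exp, integrableOn_univ] at this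
  simpa only [abs_exp_smul_gammaIntegrand] using this (GammaIntegral_convergent hs)

theorem expGammaIntegrand_le (hs : 0 < s) (x : ℝ) :
    expGammaIntegrand s x ≤ s ^ s * exp (-s) := by
  rw [rpow_def_of_pos hs, ← exp_add, expGammaIntegrand, exp_le_exp]
  have hexp : exp x = s * exp (x - log s) := by rw [exp_sub, exp_log hs]; field_simp
  nlinarith [mul_le_mul_of_nonneg_left (add_one_le_exp (x - log s)) hs.le]

theorem isUnimodalAt_expGammaIntegrand (hs : 0 < s) :
    IsUnimodalAt (expGammaIntegrand s) (log s) := by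
  constructor
  · intro x _ y hy hxy
    have hey : exp y ≤ s := by rw [← exp_log hs]; exact exp_le_exp.2 hy
    have hexp : exp x = exp y * exp (x - y) := by rw [← exp_add]; ring_nf
    rw [expGammaIntegrand, expGammaIntegrand, exp_le_exp]
    nlinarith [mul_le_mul_of_nonneg_left (add_one_le_exp (x - y)) (exp_pos y).le]
  · intro x hx y _ hxy
    have hex : s ≤ exp x := by rw [← exp_log hs]; exact exp_le_exp.2 hx
    have hexp : exp y = exp x * exp (y - x) := by rw [← exp_add]; ring_nf
    rw [expGammaIntegrand, expGammaIntegrand, exp_le_exp]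
    nlinarith [mul_le_mul_of_nonneg_left (add_one_le_exp (y - x)) (exp_pos x).le]

end expGammaIntegrand

theorem two_rpow_mul_exp_eq {b : ℝ} (hb : 0 < b) (α y : ℝ) :
    (2 : ℝ) ^ (-(α * y)) * exp (-b * 2 ^ (-(2 * y))) =
      b ^ (-(α / 2)) * expGammaIntegrand (α / 2) (log b - 2 * log 2 * y) := by
  rw [expGammaIntegrand, sub_eq_add_neg (log b), exp_add, exp_log hb, rpow_def_of_pos two_pos,
    rpow_def_of_pos two_pos, rpow_def_of_pos hb, ← exp_add, ← exp_add]
  ring_nf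

theorem dyadic_gaussian_series_bound_general (α b : ℝ) (hb : 0 < b) (hα : 0 < α) :
    ∑' k : ℕ, (2 : ℝ) ^ (-(α * (k : ℝ))) * Real.exp (-b * 2 ^ (-(2 * (k : ℝ)))) ≤
      b ^ (-(α / 2)) *
        ((α / 2) ^ (α / 2) / (1 - (2 : ℝ) ^ (-α)) +
          Real.Gamma (α / 2) / (2 * Real.log 2)) := by
  have hs : 0 < α / 2 := half_pos hα
  have hκ : 0 < 2 * log 2 := by positivity
  have hC : 0 ≤ b ^ (-(α / 2)) := by positivity
  set F : ℝ → ℝ := fun y =>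
    b ^ (-(α / 2)) * expGammaIntegrand (α / 2) (log b - 2 * log 2 * y)
  have hF : IsUnimodalAt F _ :=
    ((isUnimodalAt_expGammaIntegrand hs).comp_sub_mul (log b) hκ).const_mul hC
  have hF_int : Integrable F :=
    (((integrable_expGammaIntegrand hs).comp_sub_left (log b)).comp_mul_left' hκ.ne').const_mul _
  have hF_integral : ∫ y, F y = b ^ (-(α / 2)) * (Gamma (α / 2) / (2 * log 2)) := by
    rw [integral_const_mul, integral_comp_sub_mul_of_pos _ _ hκ, integral_expGammaIntegrand hs]
    ring
  have hsum := hF.tsum_le_integral_add hF_int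
    (fun y => mul_nonneg hC (expGammaIntegrand_nonneg _ _))
    (fun y => mul_le_mul_of_nonneg_left (expGammaIntegrand_le hs _) hC)
  simp_rw [two_rpow_mul_exp_eq hb]
  refine hsum.trans ?_
  rw [hF_integral, ← mul_add, add_comm]
  have h2α : 0 < 1 - (2 : ℝ) ^ (-α) :=
    sub_pos.2 (rpow_lt_one_of_one_lt_of_neg one_lt_two (neg_neg_of_pos hα))
  have hexp_le : exp (-(α / 2)) ≤ (1 - (2 : ℝ) ^ (-α))⁻¹ :=
    (exp_le_one_iff.2 (neg_nonpos.2 hs.le)).trans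
      ((one_le_inv₀ h2α).2 (sub_le_self _ (rpow_nonneg zero_le_two _)))
  rw [div_eq_mul_inv _ (1 - _)]
  gcongr

/-- The analytic bound on the dyadic Gaussian-tail series used in the proof of
Theorem 2: for every `b > 0` and every `α` with `0 < α ≤ 2b`,
`S(α, b) = ∑_{k=0}^∞ 2^{−αk} exp(−b 2^{−2k})
  ≤ b^{−α/2} [(α/2)^{α/2}/(1 − 2^{−α}) + Γ(α/2)/(2 ln 2)]`. -/
theorem dyadic_gaussian_series_bound (α b : ℝ) (hb : 0 < b) (hα : 0 < α)
    (hαb : α ≤ 2 * b) :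
    ∑' k : ℕ, (2 : ℝ) ^ (-(α * (k : ℝ))) * Real.exp (-b * 2 ^ (-(2 * (k : ℝ)))) ≤
      b ^ (-(α / 2)) *
        ((α / 2) ^ (α / 2) / (1 - (2 : ℝ) ^ (-α)) +
          Real.Gamma (α / 2) / (2 * Real.log 2)) :=
  dyadic_gaussian_series_bound_general α b hb hα
end
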